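/- Let l₁ ≤ l₂ ≤ … ≤ l_B be the elements of a multiset I, and L₁ ≥ L₂ ≥ … ≥ L_{B'} (B' ≤ B) elements of a multiset O. Among all ways of choosing B' elements of I to remove and B' elements of O to insert, the choice that removes l₁,…,l_{B'} and inserts L₁,…,L_{B'} maximizes ∑_{k} V(k) over the resulting multiset, for every nondecreasing V : ℕ → ℝ. -/

import Mathlib

/-- The multiset of the `k` smallest elements of `Z`. -/
def Multiset.smallest (k : ℕ) (Z : Multiset ℕ) : Multiset ℕ :=
  ((Z.sort (· ≤ ·)).take k : List ℕ)

/-- The multiset of the `k` largest elements of `Z`. -/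
def Multiset.largest (k : ℕ) (Z : Multiset ℕ) : Multiset ℕ :=
  ((Z.sort (· ≤ ·)).reverse.take k : List ℕ)

/-! Since `I - R + S` has value `V(I) - V(R) + V(S)`, it suffices that among submultisets of a
given size, the `B'` smallest elements of `I` have the least value and the `B'` largest elements
of `O` the greatest. Both follow from one fact about a sublist `s` of a sorted list `l`: the `i`-th
entry of `s` sits at an index `≥ i` of `l`, so the first `|s|` entries of `l` are entrywise below
`s`. -/

namespace List

theorem Sublist.forall₂_take_length {α : Type*} {r : α → α → Prop} [Std.Refl r]
    {s l : List α} (hsl : s <+ l) (hl : l.Pairwise r) :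
    Forall₂ r (l.take s.length) s := by
  obtain ⟨f, hf⟩ := sublist_iff_exists_orderEmbedding_getElem?_eq.mp hsl
  refine forall₂_iff_get.mpr ⟨by simp [hsl.length_le], fun i _ hi => ?_⟩
  obtain ⟨hfi, hsi⟩ := getElem?_eq_some_iff.mp ((hf i).symm.trans (getElem?_eq_getElem hi))
  have hle : i ≤ f i := f.strictMono.id_le i
  simp only [get_eq_getElem, getElem_take, ← hsi]
  exact hl.rel_get_of_le (a := ⟨i, hle.trans_lt hfi⟩) (b := ⟨f i, hfi⟩) hle

theorem Forall₂.sum_map_le_sum_map {α M : Type*} [AddCommMonoid M] [PartialOrder M]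
    [IsOrderedAddMonoid M] {r : α → α → Prop} {V : α → M} (hV : ∀ ⦃a b⦄, r a b → V a ≤ V b)
    {l₁ l₂ : List α} (h : Forall₂ r l₁ l₂) : (l₁.map V).sum ≤ (l₂.map V).sum :=
  Forall₂.sum_le_sum <| forall₂_map_left_iff.mpr <| forall₂_map_right_iff.mpr <| h.imp hV

end List

namespace Multiset

theorem sum_map_tsub_le_sum_map_tsub {α M : Type*} [DecidableEq α] [AddCommMonoid M]
    [PartialOrder M] [IsOrderedCancelAddMonoid M] (V : α → M) {I R R' : Multiset α}
    (hR : R ≤ I) (hR' : R' ≤ I) (h : (R'.map V).sum ≤ (R.map V).sum) :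
    ((I - R).map V).sum ≤ ((I - R').map V).sum := by
  have hsplit {T : Multiset α} (hT : T ≤ I) :
      ((I - T).map V).sum + (T.map V).sum = (I.map V).sum := by
    rw [← sum_add, ← map_add, tsub_add_cancel_of_le hT]
  refine le_of_add_le_add_right (a := (R.map V).sum) ?_
  calc ((I - R).map V).sum + (R.map V).sum
      = ((I - R').map V).sum + (R'.map V).sum := by rw [hsplit hR, hsplit hR']
    _ ≤ ((I - R').map V).sum + (R.map V).sum := add_le_add_right h _

variable {M : Type*} [AddCommMonoid M] [PartialOrder M] [IsOrderedAddMonoid M] {V : ℕ → M}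

theorem smallest_le (k : ℕ) (Z : Multiset ℕ) : smallest k Z ≤ Z := by
  conv_rhs => rw [← sort_eq Z (· ≤ ·)]
  exact coe_le.mpr (List.take_sublist _ _).subperm

theorem sum_map_smallest_card_le (hV : Monotone V) {R I : Multiset ℕ} (hR : R ≤ I) :
    ((smallest R.card I).map V).sum ≤ (R.map V).sum := by
  have hsub : (R.sort (· ≤ ·)).Sublist (I.sort (· ≤ ·)) :=
    List.sublist_of_subperm_of_pairwise (by rwa [← coe_le, sort_eq, sort_eq])
      (pairwise_sort R _) (pairwise_sort I _)
  conv_rhs => rw [← sort_eq R (· ≤ ·)]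
  rw [smallest, ← length_sort (· ≤ ·), map_coe, map_coe, sum_coe, sum_coe]
  exact (hsub.forall₂_take_length (pairwise_sort I _)).sum_map_le_sum_map @hV

theorem sum_map_le_largest_card (hV : Monotone V) {S O : Multiset ℕ} (hS : S ≤ O) :
    (S.map V).sum ≤ ((largest S.card O).map V).sum := by
  have hO : (O.sort (· ≤ ·)).reverse.Pairwise (· ≥ ·) :=
    List.pairwise_reverse.mpr (pairwise_sort O _)
  have hsub : (S.sort (· ≤ ·)).reverse.Sublist (O.sort (· ≤ ·)).reverse :=
    List.sublist_of_subperm_of_pairwise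
      (by rwa [← coe_le, coe_reverse, coe_reverse, sort_eq, sort_eq])
      (List.pairwise_reverse.mpr (pairwise_sort S _)) hO
  conv_lhs => rw [← sort_eq S (· ≤ ·), ← coe_reverse]
  rw [largest, ← length_sort (· ≤ ·), ← List.length_reverse, map_coe, map_coe, sum_coe, sum_coe]
  exact (hsub.forall₂_take_length hO).flip.sum_map_le_sum_map @hV

end Multiset

theorem best_batch_swap_general (V : ℕ → ℝ) (hV : Monotone V)
    (I O : Multiset ℕ) (B' : ℕ)
    (R S : Multiset ℕ) (hR : R ≤ I) (hS : S ≤ O)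
    (hRcard : R.card = B') (hScard : S.card = B') :
    ((I - R + S).map V).sum ≤
      ((I - Multiset.smallest B' I + Multiset.largest B' O).map V).sum := by
  subst hRcard
  rw [Multiset.map_add, Multiset.map_add, Multiset.sum_add, Multiset.sum_add]
  refine add_le_add ?_ (hScard ▸ Multiset.sum_map_le_largest_card hV hS)
  exact Multiset.sum_map_tsub_le_sum_map_tsub V hR (Multiset.smallest_le _ _)
    (Multiset.sum_map_smallest_card_le hV hR)

/-- Removing the `B'` smallest cached lifetimes and inserting the `B'` largest
outside lifetimes maximizes the total cache value among all such batch swaps,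
for every nondecreasing value function `V`. -/
theorem best_batch_swap (V : ℕ → ℝ) (hV : Monotone V)
    (I O : Multiset ℕ) (B' : ℕ) (hB'I : B' ≤ I.card) (hB'O : B' ≤ O.card)
    (R S : Multiset ℕ) (hR : R ≤ I) (hS : S ≤ O)
    (hRcard : R.card = B') (hScard : S.card = B') :
    ((I - R + S).map V).sum ≤
      ((I - Multiset.smallest B' I + Multiset.largest B' O).map V).sum :=
  best_batch_swap_general V hV I O B' R S hR hS hRcard hScard
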